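/- arXiv:1909.03763 — 3 statements merged into one kernel-verified Lean document; each statement's English description precedes it below -/
import Mathlib

section
/- Let X and Θ be compact metric spaces and f : X × Θ → ℝ^p a continuous function such that for every θ ∈ Θ the image {f(x,θ) : x ∈ X} spans ℝ^p. Then there exist finitely many points x₁,…,x_m ∈ X such that for every θ ∈ Θ the vectors f(x₁,θ),…,f(x_m,θ) span ℝ^p. -/
/-! For each `θ₀` pick `p` points whose images at `θ₀` are linearly independent. Linear
independence is an open condition, so these points still give a basis at every `θ` near `θ₀`;
finitely many such neighbourhoods cover the compact `Θ`, and the union of the chosen points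
works for every `θ`. -/

open Set Submodule Module

section LinearAlgebra

variable {K V ι : Type*} [DivisionRing K] [AddCommGroup V] [Module K V] [FiniteDimensional K V]

theorem exists_linearIndependent_fin_finrank_of_span_eq_top {v : ι → V}
    (hv : span K (range v) = ⊤) :
    ∃ a : Fin (finrank K V) → ι, LinearIndependent K (v ∘ a) := by
  obtain ⟨w, hw_mem, -, hw_li⟩ := exists_fun_fin_finrank_span_eq K (range v)
  choose a ha using hw_mem
  let e : Fin (finrank K V) ≃ Fin (finrank K (span K (range v))) :=
    finCongr (by rw [hv, finrank_top])
  refine ⟨a ∘ e, ?_⟩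
  have hvw : v ∘ a ∘ e = w ∘ e := funext fun i => ha (e i)
  rw [hvw]
  exact hw_li.comp e e.injective

end LinearAlgebra

section Topology

variable {𝕜 E Θ ι : Type*} [NontriviallyNormedField 𝕜] [CompleteSpace 𝕜]
  [NormedAddCommGroup E] [NormedSpace 𝕜 E] [FiniteDimensional 𝕜 E]
  [TopologicalSpace Θ] [CompactSpace Θ]

theorem exists_finite_forall_span_image_eq_top_of_compactSpace (g : ι → Θ → E)
    (hg : ∀ i, Continuous (g i)) (hspan : ∀ θ, span 𝕜 (range fun i => g i θ) = ⊤) :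
    ∃ s : Set ι, s.Finite ∧ ∀ θ, span 𝕜 ((fun i => g i θ) '' s) = ⊤ := by
  choose a ha using fun θ₀ => exists_linearIndependent_fin_finrank_of_span_eq_top (hspan θ₀)
  let U θ₀ : Set Θ := {θ | LinearIndependent 𝕜 fun k => g (a θ₀ k) θ}
  have hU : ∀ θ₀, IsOpen (U θ₀) := fun θ₀ =>
    isOpen_setOfPred_linearIndependent.preimage (continuous_pi fun k => hg (a θ₀ k))
  obtain ⟨t, ht⟩ :=
    isCompact_univ.elim_finite_subcover U hU fun θ _ => mem_iUnion.2 ⟨θ, ha θ⟩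
  refine ⟨⋃ θ₀ ∈ t, range (a θ₀), t.finite_toSet.biUnion fun _ _ => finite_range _, fun θ => ?_⟩
  obtain ⟨θ₀, hθ₀, hθ⟩ := mem_iUnion₂.1 (ht (mem_univ θ))
  have hbasis : span 𝕜 (range fun k => g (a θ₀ k) θ) = ⊤ :=
    LinearIndependent.span_eq_top_of_card_eq_finrank' hθ (Fintype.card_fin _)
  refine top_unique (hbasis.symm.trans_le (span_mono ?_))
  rintro _ ⟨k, rfl⟩
  exact mem_image_of_mem _ (mem_biUnion hθ₀ (mem_range_self k))

end Topology

theorem stmt0_general {X Θ : Type*} [MetricSpace X]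
    [MetricSpace Θ] [CompactSpace Θ] {p : ℕ}
    (f : X × Θ → EuclideanSpace ℝ (Fin p)) (hf : Continuous f)
    (hspan : ∀ θ : Θ, Submodule.span ℝ (Set.range fun x : X => f (x, θ)) = ⊤) :
    ∃ (m : ℕ) (xs : Fin m → X), ∀ θ : Θ,
      Submodule.span ℝ (Set.range fun i : Fin m => f (xs i, θ)) = ⊤ := by
  obtain ⟨s, hs, hs_span⟩ := exists_finite_forall_span_image_eq_top_of_compactSpace
    (fun x θ => f (x, θ)) (fun x => hf.comp (continuous_const.prodMk continuous_id)) hspan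
  obtain ⟨m, xs, -, rfl⟩ := hs.fin_param
  exact ⟨m, xs, fun θ => (range_comp (fun x => f (x, θ)) xs).symm ▸ hs_span θ⟩

theorem stmt0 {X Θ : Type*} [MetricSpace X] [CompactSpace X]
    [MetricSpace Θ] [CompactSpace Θ] {p : ℕ} (hp : 1 ≤ p)
    (f : X × Θ → EuclideanSpace ℝ (Fin p)) (hf : Continuous f)
    (hspan : ∀ θ : Θ, Submodule.span ℝ (Set.range fun x : X => f (x, θ)) = ⊤) :
    ∃ (m : ℕ) (xs : Fin m → X), ∀ θ : Θ,
      Submodule.span ℝ (Set.range fun i : Fin m => f (xs i, θ)) = ⊤ :=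
  stmt0_general f hf hspan
end

section
/- Let (β_n)_{n ≥ n_st} be a sequence in [0,1] and let 0 < β < β̃ ≤ 1 with β̃ − β ≥ 1/m for some positive integer m ≥ n_st. Suppose for all n ≥ n_st: if β_n > β then β_{n+1} = (n/(n+1)) β_n, and if β_n ≤ β then β_{n+1} ≤ β_n + 1/(n+1). Then there exists n₀ (depending only on β, β̃, n_st) such that β_n ≤ β̃ for all n ≥ n₀; explicitly one may take n₀ = ⌈1/β⌉ · max{n_st, ⌈1/(β̃ − β)⌉}. -/
/-!
Past any index `M ≥ 1 / (β̃ - β)` an increment `1 / (n + 1)` is at most `β̃ - β`, so once the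
sequence is at most `β` it can never climb above `β̃` again. Moreover, while the sequence stays
above `β` the quantity `n β_n` is constant, so starting from `β_M ≤ 1` it cannot stay above `β`
up to the index `K M` with `K β ≥ 1`: there `β_{KM} ≤ β_M / K ≤ β`.
-/

section ShrinkOrGrow

variable {u : ℕ → ℝ} {b c : ℝ}

theorem natCast_mul_eq_of_forall_shrink {N n : ℕ} (hNn : N ≤ n)
    (hshrink : ∀ j, N ≤ j → j < n → u (j + 1) = (j / (j + 1) : ℝ) * u j) :
    (n : ℝ) * u n = N * u N := by
  induction n, hNn using Nat.le_induction with
  | base => rfl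
  | succ n hNn ih =>
    rw [hshrink n hNn n.lt_succ_self, ← ih fun j hj hjn => hshrink j hj (by omega)]
    push_cast
    field_simp

theorem exists_le_of_forall_shrink {N K : ℕ} (hN : 0 < N) (huN : u N ≤ 1) (hKb : 1 ≤ K * b)
    (hshrink : ∀ j, N ≤ j → b < u j → u (j + 1) = (j / (j + 1) : ℝ) * u j) :
    ∃ j, N ≤ j ∧ j ≤ K * N ∧ u j ≤ b := by
  by_contra! hgt
  have hK : 0 < K := Nat.pos_of_ne_zero fun hK0 => by simp [hK0] at hKb; linarith
  have hNKN : N ≤ K * N := Nat.le_mul_of_pos_left N hK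
  have htel := natCast_mul_eq_of_forall_shrink hNKN
    fun j hj hjn => hshrink j hj (hgt j hj hjn.le)
  have hKu : (K : ℝ) * u (K * N) ≤ 1 := by
    have hNpos : (0 : ℝ) < N := by exact_mod_cast hN
    push_cast at htel
    nlinarith
  have hKpos : (0 : ℝ) < K := by exact_mod_cast hK
  have := hgt (K * N) hNKN le_rfl
  nlinarith

theorem succ_le_of_le_of_shrink_or_grow {k : ℕ} (hk : 1 / (k + 1 : ℝ) ≤ c - b)
    (hu0 : 0 ≤ u k) (huc : u k ≤ c)
    (hshrink : b < u k → u (k + 1) = (k / (k + 1) : ℝ) * u k)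
    (hgrow : u k ≤ b → u (k + 1) ≤ u k + 1 / (k + 1)) :
    u (k + 1) ≤ c := by
  rcases lt_or_ge b (u k) with hbu | hub
  · rw [hshrink hbu]
    exact (mul_le_of_le_one_left hu0 (div_le_one_of_le₀ (by linarith) (by positivity))).trans huc
  · linarith [hgrow hub]

end ShrinkOrGrow

theorem stmt4_general (nst : ℕ) (β : ℕ → ℝ)
    (hrange : ∀ n, nst ≤ n → β n ∈ Set.Icc (0 : ℝ) 1)
    (b bt : ℝ) (hb : 0 < b) (hbbt : b < bt)
    (hrec1 : ∀ n, nst ≤ n → b < β n → β (n + 1) = (n / (n + 1) : ℝ) * β n)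
    (hrec2 : ∀ n, nst ≤ n → β n ≤ b → β (n + 1) ≤ β n + 1 / (n + 1)) :
    ∀ n, ⌈(1 : ℝ) / b⌉₊ * max nst ⌈(1 : ℝ) / (bt - b)⌉₊ ≤ n → β n ≤ bt := by
  intro n hn
  set M := max nst ⌈(1 : ℝ) / (bt - b)⌉₊
  have hgap : 0 < bt - b := sub_pos.2 hbbt
  have hM : 1 / (bt - b) ≤ M :=
    (Nat.le_ceil _).trans (by exact_mod_cast le_max_right nst _)
  have hMpos : (0 : ℝ) < M := (one_div_pos.2 hgap).trans_le hM
  have hstep : ∀ k, M ≤ k → 1 / (k + 1 : ℝ) ≤ bt - b := fun k hk => by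
    have hMk : (M : ℝ) ≤ k := by exact_mod_cast hk
    exact (one_div_le_one_div_of_le hMpos (by linarith)).trans ((one_div_le hMpos hgap).2 hM)
  have hMnst : ∀ k, M ≤ k → nst ≤ k := fun k hk => (le_max_left _ _).trans hk
  obtain ⟨j, hMj, hjn, hj⟩ := exists_le_of_forall_shrink (Nat.cast_pos.1 hMpos)
    (hrange M (hMnst M le_rfl)).2 ((div_le_iff₀ hb).1 (Nat.le_ceil _))
    fun k hk => hrec1 k (hMnst k hk)
  replace hn := hjn.trans hn
  clear hjn
  induction n, hn using Nat.le_induction with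
  | base => exact hj.trans hbbt.le
  | succ k hjk ih =>
    have hMk := hMj.trans hjk
    exact succ_le_of_le_of_shrink_or_grow (hstep k hMk) (hrange k (hMnst k hMk)).1
      ih (hrec1 k (hMnst k hMk)) (hrec2 k (hMnst k hMk))

theorem stmt4 (nst : ℕ) (hnst : 1 ≤ nst) (β : ℕ → ℝ)
    (hrange : ∀ n, nst ≤ n → β n ∈ Set.Icc (0 : ℝ) 1)
    (b bt : ℝ) (hb : 0 < b) (hbbt : b < bt) (hbt1 : bt ≤ 1)
    (m : ℕ) (hm : nst ≤ m) (hm' : (1 : ℝ) / m ≤ bt - b)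
    (hrec1 : ∀ n, nst ≤ n → b < β n → β (n + 1) = (n / (n + 1) : ℝ) * β n)
    (hrec2 : ∀ n, nst ≤ n → β n ≤ b → β (n + 1) ≤ β n + 1 / (n + 1)) :
    ∀ n, ⌈(1 : ℝ) / b⌉₊ * max nst ⌈(1 : ℝ) / (bt - b)⌉₊ ≤ n → β n ≤ bt :=
  stmt4_general nst β hrange b bt hb hbbt hrec1 hrec2
end

section
/- Let X be a compact metric space, p ≥ 2 an integer, and let (ξ_n)_{n ≥ n₀} be a sequence of probability measures on X such that for some d > 0 and ε > 0, ξ_n(S) ≤ 1/p + ε for every nonempty set S ⊆ X of diameter at most d and every n ≥ n₀. Set d₀ = d/3. Then there exists π₀ > 0 such that for each n ≥ n₀ there exist p subsets S_{1,n},…,S_{p,n} of X with ξ_n(S_{j,n}) ≥ π₀ for all j, diam(S_{j,n}) ≤ d₀ for all j, and dist(S_{j,n}, S_{k,n}) ≥ d₀ for all j < k, provided ε < 1/(p(p−1)). -/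
/-!
Cover `X` by finitely many, say `q`, balls of diameter `d/3` and put `π₀ = (1/p - (p-1)ε)/q`.
Choose the sets greedily: once `j < p` sets of diameter `≤ d/3` are chosen, their
`d/3`-thickenings have diameter `≤ d`, hence total mass `≤ j(1/p + ε)`, so the complement of the
thickenings has mass `≥ 1/p - (p-1)ε = q π₀`. One of the `q` balls meets that complement in mass
`≥ π₀`; this piece is the next set, and it lies at distance `≥ d/3` from all the earlier ones.
-/

open MeasureTheory Metric Set
open scoped ENNReal

theorem exists_measure_le_card_mul_measure_inter {α ι : Type*} [MeasurableSpace α]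
    (μ : Measure α) {t : Finset ι} (ht : t.Nonempty) (U : ι → Set α) {B : Set α}
    (hB : B ⊆ ⋃ i ∈ t, U i) : ∃ i ∈ t, μ B ≤ t.card * μ (U i ∩ B) := by
  obtain ⟨i, hi, hmax⟩ := t.exists_max_image (fun i ↦ μ (U i ∩ B)) ht
  refine ⟨i, hi, ?_⟩
  calc μ B ≤ μ (⋃ i ∈ t, U i ∩ B) := measure_mono fun x hx ↦ by
          obtain ⟨j, hj, hxj⟩ := mem_iUnion₂.mp (hB hx)
          exact mem_biUnion hj ⟨hxj, hx⟩
    _ ≤ ∑ j ∈ t, μ (U j ∩ B) := measure_biUnion_finset_le t _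
    _ ≤ t.card • μ (U i ∩ B) := Finset.sum_le_card_nsmul t _ _ hmax
    _ = t.card * μ (U i ∩ B) := nsmul_eq_mul _ _

section SeparatedFamily

variable {X : Type*} [PseudoMetricSpace X] [MeasurableSpace X]

def IsSeparatedFamily (μ : Measure X) (m : ℝ≥0∞) (r : ℝ) (j : ℕ) (S : ℕ → Set X) : Prop :=
  ∀ i < j, m ≤ μ (S i) ∧ diam (S i) ≤ r ∧ ∀ k < i, ∀ x ∈ S k, ∀ z ∈ S i, r ≤ dist x z

theorem exists_far_set_of_le_measure_compl_thickening (μ : Measure X) {r : ℝ} (hr : 0 ≤ r)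
    {t : Finset X} (ht : t.Nonempty) (hcover : univ ⊆ ⋃ x ∈ t, ball x (r / 2))
    {A : Set X} {m : ℝ≥0∞} (hA : t.card * m ≤ μ (thickening r A)ᶜ) :
    ∃ P, m ≤ μ P ∧ diam P ≤ r ∧ ∀ x ∈ A, ∀ z ∈ P, r ≤ dist x z := by
  obtain ⟨y, -, hy⟩ := exists_measure_le_card_mul_measure_inter μ ht (fun x ↦ ball x (r / 2))
    ((subset_univ _).trans hcover)
  refine ⟨ball y (r / 2) ∩ (thickening r A)ᶜ, ?_, ?_, ?_⟩
  · have hcard : (t.card : ℝ≥0∞) ≠ 0 := by exact_mod_cast ht.card_pos.ne'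
    exact (ENNReal.mul_le_mul_iff_right hcard (ENNReal.natCast_ne_top _)).mp (hA.trans hy)
  · calc diam (ball y (r / 2) ∩ (thickening r A)ᶜ) ≤ diam (ball y (r / 2)) :=
          diam_mono inter_subset_left isBounded_ball
      _ ≤ 2 * (r / 2) := diam_ball (by linarith)
      _ = r := by ring
  · intro x hx z hz
    by_contra! hlt
    exact hz.2 (mem_thickening_iff.mpr ⟨x, hx, by rwa [dist_comm]⟩)

theorem exists_isSeparatedFamily (μ : Measure X) {r : ℝ} (hr : 0 ≤ r) {t : Finset X}
    (ht : t.Nonempty) (hcover : univ ⊆ ⋃ x ∈ t, ball x (r / 2)) {m : ℝ≥0∞} {p : ℕ}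
    (hroom : ∀ j < p, ∀ S, IsSeparatedFamily μ m r j S →
      t.card * m ≤ μ (⋃ i < j, thickening r (S i))ᶜ) :
    ∃ S, IsSeparatedFamily μ m r p S := by
  suffices ∀ j ≤ p, ∃ S, IsSeparatedFamily μ m r j S from this p le_rfl
  intro j
  induction j with
  | zero => exact fun _ ↦ ⟨fun _ ↦ ∅, fun i hi ↦ absurd hi (Nat.not_lt_zero i)⟩
  | succ j ih =>
    intro hj
    obtain ⟨S, hS⟩ := ih (by omega)
    have hroom' := hroom j hj S hS
    simp only [← thickening_iUnion] at hroom'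
    obtain ⟨P, hPm, hPdiam, hPfar⟩ :=
      exists_far_set_of_le_measure_compl_thickening μ hr ht hcover hroom'
    refine ⟨Function.update S j P, fun i hi ↦ ?_⟩
    rcases Nat.lt_succ_iff_lt_or_eq.mp hi with hij | rfl
    · have hS' : ∀ k ≤ i, Function.update S j P k = S k := fun k hk ↦
        Function.update_of_ne (by omega) _ _
      obtain ⟨hm, hdiam, hfar⟩ := hS i hij
      rw [hS' i le_rfl]
      exact ⟨hm, hdiam, fun k hk ↦ hS' k hk.le ▸ hfar k hk⟩
    · refine ⟨by simpa using hPm, by simpa using hPdiam, fun k hk x hx z hz ↦ ?_⟩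
      rw [Function.update_of_ne hk.ne] at hx
      exact hPfar x (mem_biUnion hk hx) z (by simpa using hz)

theorem one_sub_le_measure_compl_iUnion_thickening [OpensMeasurableSpace X] (μ : Measure X)
    [IsProbabilityMeasure μ] {d a : ℝ} (hd : 0 < d)
    (hsmall : ∀ S : Set X, S.Nonempty → diam S ≤ d → μ S ≤ ENNReal.ofReal a)
    {j : ℕ} {S : ℕ → Set X} (hS : ∀ i < j, (S i).Nonempty ∧ diam (S i) ≤ d / 3) :
    1 - j * ENNReal.ofReal a ≤ μ (⋃ i < j, thickening (d / 3) (S i))ᶜ := by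
  have hopen : IsOpen (⋃ i < j, thickening (d / 3) (S i)) :=
    isOpen_biUnion fun _ _ ↦ isOpen_thickening
  rw [prob_compl_eq_one_sub hopen.measurableSet]
  refine tsub_le_tsub_left ?_ 1
  have hthick : ∀ i < j, μ (thickening (d / 3) (S i)) ≤ ENNReal.ofReal a := fun i hi ↦
    hsmall _ ((hS i hi).1.mono (self_subset_thickening (by positivity) _)) <| calc
      diam (thickening (d / 3) (S i)) ≤ diam (S i) + 2 * (d / 3) :=
        diam_thickening_le _ (by positivity)
      _ ≤ d := by linarith [(hS i hi).2]
  calc μ (⋃ i < j, thickening (d / 3) (S i))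
      = μ (⋃ i ∈ Finset.range j, thickening (d / 3) (S i)) := by simp only [Finset.mem_range]
    _ ≤ ∑ i ∈ Finset.range j, μ (thickening (d / 3) (S i)) := measure_biUnion_finset_le _ _
    _ ≤ ∑ _i ∈ Finset.range j, ENNReal.ofReal a :=
        Finset.sum_le_sum fun i hi ↦ hthick i (Finset.mem_range.mp hi)
    _ = j * ENNReal.ofReal a := by simp

end SeparatedFamily

theorem ofReal_one_div_sub_le_one_sub_mul {p j : ℕ} (hj : j < p) {ε : ℝ} (hε : 0 ≤ ε) :
    ENNReal.ofReal (1 / p - (p - 1) * ε) ≤ 1 - j * ENNReal.ofReal (1 / p + ε) := by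
  have hp : (0 : ℝ) < p := by exact_mod_cast j.zero_le.trans_lt hj
  have hjp : (j : ℝ) ≤ p - 1 := by
    have : (j : ℝ) + 1 ≤ p := by exact_mod_cast hj
    linarith
  rw [← ENNReal.ofReal_natCast, ← ENNReal.ofReal_mul j.cast_nonneg, ← ENNReal.ofReal_one,
    ← ENNReal.ofReal_sub _ (by positivity : (0 : ℝ) ≤ j * (1 / p + ε))]
  refine ENNReal.ofReal_le_ofReal ?_
  calc 1 / p - (p - 1) * ε = 1 - (p - 1) * (1 / p + ε) := by field_simp; ring
    _ ≤ 1 - j * (1 / p + ε) := by gcongr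

theorem one_div_sub_mul_pos {p : ℕ} (hp : 2 ≤ p) {ε : ℝ} (hε : ε < 1 / (p * (p - 1) : ℝ)) :
    0 < 1 / p - (p - 1) * ε := by
  have hp1 : (1 : ℝ) < p := by exact_mod_cast hp
  have : (p - 1) * ε < (p - 1) * (1 / (p * (p - 1))) := mul_lt_mul_of_pos_left hε (by linarith)
  have hp1' : (p : ℝ) - 1 ≠ 0 := by linarith
  rw [show ((p : ℝ) - 1) * (1 / (p * (p - 1))) = 1 / p by field_simp] at this
  linarith

theorem stmt5 {X : Type*} [MetricSpace X] [CompactSpace X]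
    [MeasurableSpace X] [BorelSpace X]
    (p : ℕ) (hp : 2 ≤ p) (n₀ : ℕ) (ξ : ℕ → Measure X)
    (hprob : ∀ n, IsProbabilityMeasure (ξ n))
    (d ε : ℝ) (hd : 0 < d) (hε : 0 < ε) (hεsmall : ε < 1 / (p * (p - 1) : ℝ))
    (hsmall : ∀ n, n₀ ≤ n → ∀ S : Set X, S.Nonempty → Metric.diam S ≤ d →
      ξ n S ≤ ENNReal.ofReal (1 / p + ε)) :
    ∃ π₀ > (0 : ℝ), ∀ n, n₀ ≤ n → ∃ S : Fin p → Set X,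
      (∀ j, ENNReal.ofReal π₀ ≤ ξ n (S j)) ∧
      (∀ j, Metric.diam (S j) ≤ d / 3) ∧
      (∀ j k : Fin p, j < k → ∀ x ∈ S j, ∀ z ∈ S k, d / 3 ≤ dist x z) := by
  have : Nonempty X := nonempty_of_isProbabilityMeasure (ξ n₀)
  obtain ⟨t, hcover⟩ := isCompact_univ.elim_finite_subcover (fun x : X ↦ ball x (d / 3 / 2))
    (fun _ ↦ isOpen_ball) fun x _ ↦ mem_iUnion.mpr ⟨x, mem_ball_self (by positivity)⟩
  have ht : t.Nonempty := by
    obtain ⟨y, hy, -⟩ := mem_iUnion₂.mp (hcover (mem_univ (Classical.arbitrary X)))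
    exact ⟨y, hy⟩
  set c := 1 / (p : ℝ) - (p - 1) * ε
  have hc : 0 < c := one_div_sub_mul_pos hp hεsmall
  have hcard : (0 : ℝ) < t.card := by exact_mod_cast ht.card_pos
  refine ⟨c / t.card, div_pos hc hcard, fun n hn ↦ ?_⟩
  have hroom : ∀ j < p, ∀ S, IsSeparatedFamily (ξ n) (ENNReal.ofReal (c / t.card)) (d / 3) j S →
      t.card * ENNReal.ofReal (c / t.card) ≤ ξ n (⋃ i < j, thickening (d / 3) (S i))ᶜ := by
    intro j hj S hS
    have hS' : ∀ i < j, (S i).Nonempty ∧ diam (S i) ≤ d / 3 := fun i hi ↦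
      ⟨nonempty_of_measure_ne_zero ((ENNReal.ofReal_pos.mpr (div_pos hc hcard)).trans_le
        (hS i hi).1).ne', (hS i hi).2.1⟩
    calc t.card * ENNReal.ofReal (c / t.card) = ENNReal.ofReal c := by
          rw [← ENNReal.ofReal_natCast, ← ENNReal.ofReal_mul (by positivity), mul_div_cancel₀ _
            hcard.ne']
      _ ≤ 1 - j * ENNReal.ofReal (1 / p + ε) := ofReal_one_div_sub_le_one_sub_mul hj hε.le
      _ ≤ _ := one_sub_le_measure_compl_iUnion_thickening (ξ n) hd (hsmall n hn) hS'
  obtain ⟨S, hS⟩ := exists_isSeparatedFamily (ξ n) (by positivity) ht hcover hroom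
  exact ⟨fun j ↦ S j, fun j ↦ (hS j j.2).1, fun j ↦ (hS j j.2).2.1,
    fun j k hjk ↦ (hS k k.2).2.2 j hjk⟩
end
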